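/- Let F_{n,p} be the random 2-SAT formula and x, y strictly distinct literals. Then Pr(x⇝x̄ and y⇝ȳ in F_{n,p}) − Pr(x⇝x̄)·Pr(y⇝ȳ) ≤ Σ_{k≥1} P_{n,p}(k)·[Pr(x⇝x̄ in F_{n,p}) − ((n−k)/(n−1))·Pr(x⇝x̄ in F_{n−k,p})], where P_{n,p}(k) is the probability that L⁺(y) is strictly distinct of size k. -/

import Mathlib

/-- The probability of an event `A` when each coordinate `e : E` is an
independent Bernoulli(`p`) bit. -/
noncomputable def bernoulliPr {E : Type*} [Fintype E] [DecidableEq E]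
    (p : ℝ) (A : Set (E → Bool)) : ℝ :=
  ∑ ω : E → Bool,
    Set.indicator A (fun ω' => ∏ e : E, if ω' e = true then p else 1 - p) ω

/-- A literal over `n` Boolean variables. -/
abbrev Lit (n : ℕ) := Fin n × Bool

/-- Negation of a literal. -/
def negLit {n : ℕ} (x : Lit n) : Lit n := (x.1, !x.2)

/-- Edge relation of the implication digraph of the random 2-SAT formula
encoded by `ω` : there is an edge `x → y` iff the clause `x̄ ∨ y` (an unordered
pair of strictly distinct literals) is present. -/
def fEdge {n : ℕ} (ω : Sym2 (Lit n) → Bool) (x y : Lit n) : Prop :=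
  x.1 ≠ y.1 ∧ ω s(negLit x, y) = true

/-- Directed reachability in the implication digraph (`x ⇝ x` by convention). -/
def freach {n : ℕ} (ω : Sym2 (Lit n) → Bool) : Lit n → Lit n → Prop :=
  Relation.ReflTransGen (fEdge ω)

/-- The out-set `L⁺(x)` of a literal `x`. -/
def outSet {n : ℕ} (ω : Sym2 (Lit n) → Bool) (x : Lit n) : Set (Lit n) :=
  {y | freach ω x y}

/-- A set of literals is strictly distinct if it contains no literal together
with its negation. -/
def SDset {n : ℕ} (M : Set (Lit n)) : Prop := ∀ y ∈ M, negLit y ∉ M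

/-- `P_{n,p}(k)` : the probability that in the random 2-SAT formula `F_{n,p}`
the out-set of the literal `x` consists of exactly `k` strictly distinct
literals. -/
noncomputable def Pnp (n : ℕ) (p : ℝ) (k : ℕ) (x : Lit n) : ℝ :=
  bernoulliPr p
    {ω : Sym2 (Lit n) → Bool | SDset (outSet ω x) ∧ (outSet ω x).ncard = k}

/-- The random graph `G_{n,q}` encoded by a configuration of edge-bits. -/
def graphOf {n : ℕ} (η : Sym2 (Fin n) → Bool) : SimpleGraph (Fin n) :=
  SimpleGraph.fromRel fun a b => η s(a, b) = true

/-- The probability that `G_{k,p}` is connected. -/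
noncomputable def connPr (k : ℕ) (p : ℝ) : ℝ :=
  bernoulliPr p {η : Sym2 (Fin k) → Bool | (graphOf η).Connected}

/-- `Q_{n,p}(k)` : the probability that the connected component of the vertex
`v` in `G_{n,2p-p²}` has exactly `k` vertices. -/
noncomputable def Qnp (n : ℕ) (p : ℝ) (k : ℕ) (v : Fin n) : ℝ :=
  bernoulliPr (2 * p - p ^ 2)
    {η : Sym2 (Fin n) → Bool | {y | (graphOf η).Reachable v y}.ncard = k}

/-- The probability that `x ⇝ x̄` in `F_{m,p}` for a (fixed, canonical) literal;
this probability does not depend on the choice of the literal.  For `m = 0`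
there are no literals and the value is `0`. -/
noncomputable def spineProb (m : ℕ) (p : ℝ) : ℝ :=
  if h : 0 < m then
    bernoulliPr p
      {ω : Sym2 (Lit m) → Bool |
        freach ω ((⟨0, h⟩, true) : Lit m) (negLit ((⟨0, h⟩, true) : Lit m))}
  else 0

/-!
Write `A` for `x ⇝ x̄` and `B` for `y ⇝ ȳ`. Off `B` the out-set `L⁺(y)` is strictly distinct,
of some size `1 ≤ k ≤ n`, so the inequality reduces to
`P_{n,p}(k) · (n-k)/(n-1) · Pr(x ⇝ x̄ in F_{n-k,p}) ≤ Pr(A ∧ L⁺(y) strictly distinct of size k)`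
for each `k`. Permuting the variables other than that of `y` shows that, given this event,
the variable of `x` avoids `L⁺(y)` with probability `(n-k)/(n-1)`. Fix then `L⁺(y) = S`
with `S` avoiding `x`: this event only reads the clauses meeting the `k` variables of `S`,
while the clauses on the other `n - k` variables form an independent copy of `F_{n-k,p}`,
in which a path `x ⇝ x̄` is also a path of `F_{n,p}`.
-/

open Function Finset

section BernoulliPr

variable {E F : Type*} [Fintype E] [Fintype F] {p : ℝ}

def bernoulliWeight (p : ℝ) (ω : E → Bool) : ℝ :=
  ∏ e, if ω e = true then p else 1 - p

theorem bernoulliWeight_nonneg (hp0 : 0 ≤ p) (hp1 : p ≤ 1) (ω : E → Bool) :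
    0 ≤ bernoulliWeight p ω :=
  prod_nonneg fun e _ => by split_ifs <;> linarith

theorem bernoulliWeight_comp_equiv {E' : Type*} [Fintype E'] (σ : E' ≃ E) (ω : E → Bool) :
    bernoulliWeight p (ω ∘ σ) = bernoulliWeight p ω :=
  σ.prod_comp fun e => if ω e = true then p else 1 - p

theorem bernoulliWeight_sum_elim (u : E → Bool) (v : F → Bool) :
    bernoulliWeight p (Sum.elim u v) = bernoulliWeight p u * bernoulliWeight p v :=
  Fintype.prod_sum_type _

variable [DecidableEq E] [DecidableEq F]

theorem bernoulliPr_eq_sum (p : ℝ) (A : Set (E → Bool)) :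
    bernoulliPr p A = ∑ ω, A.indicator (bernoulliWeight p) ω :=
  rfl

theorem sum_bernoulliWeight (p : ℝ) : ∑ ω : E → Bool, bernoulliWeight p ω = 1 := by
  simp [bernoulliWeight, ← Fintype.prod_sum (fun (_ : E) (b : Bool) => if b then p else 1 - p)]

@[simp]
theorem bernoulliPr_univ (p : ℝ) : bernoulliPr p (Set.univ : Set (E → Bool)) = 1 := by
  simp [bernoulliPr_eq_sum, sum_bernoulliWeight]

@[simp]
theorem bernoulliPr_empty (p : ℝ) : bernoulliPr p (∅ : Set (E → Bool)) = 0 := by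
  simp [bernoulliPr_eq_sum]

theorem bernoulliPr_mono (hp0 : 0 ≤ p) (hp1 : p ≤ 1) {A B : Set (E → Bool)} (h : A ⊆ B) :
    bernoulliPr p A ≤ bernoulliPr p B :=
  sum_le_sum fun ω _ =>
    Set.indicator_le_indicator_of_subset h (bernoulliWeight_nonneg hp0 hp1) ω

theorem bernoulliPr_inter_add_inter_compl (p : ℝ) (A B : Set (E → Bool)) :
    bernoulliPr p (A ∩ B) + bernoulliPr p (A ∩ Bᶜ) = bernoulliPr p A := by
  simp only [bernoulliPr_eq_sum, ← sum_add_distrib]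
  refine sum_congr rfl fun ω _ => ?_
  by_cases hB : ω ∈ B <;> by_cases hA : ω ∈ A <;> simp [hA, hB]

theorem bernoulliPr_compl (p : ℝ) (B : Set (E → Bool)) :
    bernoulliPr p Bᶜ = 1 - bernoulliPr p B := by
  have h := bernoulliPr_inter_add_inter_compl p Set.univ B
  rw [Set.univ_inter, Set.univ_inter, bernoulliPr_univ] at h
  linarith

theorem bernoulliPr_biUnion (p : ℝ) {ι : Type*} {I : Finset ι} {A : ι → Set (E → Bool)}
    (h : (I : Set ι).PairwiseDisjoint A) :
    bernoulliPr p (⋃ i ∈ I, A i) = ∑ i ∈ I, bernoulliPr p (A i) := by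
  simp only [bernoulliPr_eq_sum]
  rw [sum_comm]
  refine sum_congr rfl fun ω _ => ?_
  exact indicator_biUnion_apply I A h ω

theorem bernoulliPr_eq_sum_fiber {β : Type*} [Fintype β] (p : ℝ) (f : (E → Bool) → β)
    (A : Set (E → Bool)) : bernoulliPr p A = ∑ b, bernoulliPr p (A ∩ f ⁻¹' {b}) := by
  have hA : A = ⋃ b ∈ (univ : Finset β), A ∩ f ⁻¹' {b} := by ext; simp
  conv_lhs => rw [hA]
  refine bernoulliPr_biUnion p fun b _ b' _ hbb' => ?_
  exact Set.disjoint_left.mpr fun ω hb hb' => hbb' (hb.2.symm.trans hb'.2)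

theorem bernoulliPr_inter_preimage_comp (p : ℝ) {g : F → E} (hg : Injective g)
    {A : Set (E → Bool)} (hA : DependsOn (· ∈ A) (Set.range g)ᶜ) (B : Set (F → Bool)) :
    bernoulliPr p (A ∩ (· ∘ g) ⁻¹' B) = bernoulliPr p A * bernoulliPr p B := by
  classical
  let T := {e // e ∉ Set.range g}
  let σ : F ⊕ T ≃ E :=
    (Equiv.sumCongr (Equiv.ofInjective g hg) (Equiv.refl T)).trans (Equiv.sumCompl _)
  let glue : (F → Bool) × (T → Bool) ≃ (E → Bool) :=
    (Equiv.sumArrowEquivProdArrow F T Bool).symm.trans (Equiv.arrowCongr σ (Equiv.refl Bool))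
  have glue_comp (u : F → Bool) (v : T → Bool) : glue (u, v) ∘ σ = Sum.elim u v := by
    ext s; cases s <;> simp [glue]
  have glue_g (u : F → Bool) (v : T → Bool) : glue (u, v) ∘ g = u :=
    funext fun f => congrFun (glue_comp u v) (.inl f)
  have weight_glue (u : F → Bool) (v : T → Bool) :
      bernoulliWeight p (glue (u, v)) = bernoulliWeight p u * bernoulliWeight p v := by
    rw [← bernoulliWeight_comp_equiv σ, glue_comp, bernoulliWeight_sum_elim]
  let A' : Set (T → Bool) := {v | glue (fun _ => false, v) ∈ A}
  have mem_A (u : F → Bool) (v : T → Bool) : glue (u, v) ∈ A ↔ v ∈ A' := by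
    refine iff_of_eq (hA fun e he => ?_)
    exact (congrFun (glue_comp u v) (.inr ⟨e, he⟩)).trans
      (congrFun (glue_comp (fun _ => false) v) (.inr ⟨e, he⟩)).symm
  have key (B : Set (F → Bool)) :
      bernoulliPr p (A ∩ (· ∘ g) ⁻¹' B) = bernoulliPr p B * bernoulliPr p A' := by
    rw [bernoulliPr_eq_sum, ← glue.sum_comp, Fintype.sum_prod_type, bernoulliPr_eq_sum,
      bernoulliPr_eq_sum, sum_mul_sum]
    refine sum_congr rfl fun u _ => sum_congr rfl fun v _ => ?_
    by_cases hu : u ∈ B <;> by_cases hv : v ∈ A' <;>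
      simp [mem_A, glue_g, weight_glue, hu, hv]
  have hA' := key Set.univ
  rw [Set.preimage_univ, Set.inter_univ, bernoulliPr_univ, one_mul] at hA'
  rw [key, hA', mul_comm]

theorem bernoulliPr_preimage_comp (p : ℝ) {g : F → E} (hg : Injective g) (B : Set (F → Bool)) :
    bernoulliPr p ((· ∘ g) ⁻¹' B) = bernoulliPr p B := by
  simpa using bernoulliPr_inter_preimage_comp p hg (A := Set.univ) (fun _ _ _ => rfl) B

open Classical in
theorem sum_bernoulliPr_eq_mul {ι : Type*} (p : ℝ) {I : Finset ι} {A : ι → Set (E → Bool)}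
    {C : Set (E → Bool)} {c : ℕ} (hAC : ∀ i ∈ I, A i ⊆ C)
    (hcard : ∀ ω ∈ C, #{i ∈ I | ω ∈ A i} = c) :
    ∑ i ∈ I, bernoulliPr p (A i) = c * bernoulliPr p C := by
  simp only [bernoulliPr_eq_sum]
  rw [sum_comm, mul_sum]
  refine sum_congr rfl fun ω _ => ?_
  by_cases hC : ω ∈ C
  · simp only [Set.indicator_apply, hC, if_true, ← sum_filter, sum_const, hcard ω hC,
      nsmul_eq_mul]
  · rw [Set.indicator_of_notMem hC, mul_zero]
    exact sum_eq_zero fun i hi => Set.indicator_of_notMem (fun h => hC (hAC i hi h)) _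

theorem mul_bernoulliPr_le_of_forall_fiber {β : Type*} [Fintype β] {p c : ℝ}
    (f : (E → Bool) → β) (Q : Set β) {A : Set (E → Bool)}
    (h : ∀ b ∈ Q, c * bernoulliPr p (f ⁻¹' {b}) ≤ bernoulliPr p (A ∩ f ⁻¹' {b})) :
    c * bernoulliPr p (f ⁻¹' Q) ≤ bernoulliPr p (A ∩ f ⁻¹' Q) := by
  rw [bernoulliPr_eq_sum_fiber p f, bernoulliPr_eq_sum_fiber p f (A ∩ _), mul_sum]
  refine sum_le_sum fun b _ => ?_
  by_cases hb : b ∈ Q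
  · have hfib : f ⁻¹' Q ∩ f ⁻¹' {b} = f ⁻¹' {b} :=
      Set.inter_eq_right.mpr (Set.preimage_mono (Set.singleton_subset_iff.mpr hb))
    rw [hfib, Set.inter_assoc, hfib]
    exact h b hb
  · have hfib : f ⁻¹' Q ∩ f ⁻¹' {b} = ∅ := by
      rw [← Set.preimage_inter, Set.inter_singleton_eq_empty.mpr hb, Set.preimage_empty]
    rw [hfib, Set.inter_assoc, hfib, Set.inter_empty, bernoulliPr_empty, mul_zero]

end BernoulliPr

section Literals

variable {m n : ℕ}

@[simp]
theorem negLit_negLit (z : Lit n) : negLit (negLit z) = z := by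
  simp [negLit]

theorem injOn_fst_of_sdset {M : Set (Lit n)} (hM : SDset M) : Set.InjOn Prod.fst M := by
  rintro ⟨a, s⟩ ha ⟨b, t⟩ hb (rfl : a = b)
  by_contra hst
  have ht : t = !s := by cases s <;> cases t <;> simp_all
  exact hM _ ha (by simpa [negLit, ht] using hb)

theorem ncard_image_fst_of_sdset {M : Set (Lit n)} (hM : SDset M) :
    (Prod.fst '' M).ncard = M.ncard :=
  (injOn_fst_of_sdset hM).ncard_image

theorem fEdge.contrapositive {ω : Sym2 (Lit n) → Bool} {a b : Lit n} (h : fEdge ω a b) :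
    fEdge ω (negLit b) (negLit a) :=
  ⟨fun hab => h.1 hab.symm, by simpa [Sym2.eq_swap] using h.2⟩

theorem freach.contrapositive {ω : Sym2 (Lit n) → Bool} {a b : Lit n} (h : freach ω a b) :
    freach ω (negLit b) (negLit a) := by
  induction h with
  | refl => exact .refl
  | tail _ hbc ih => exact .head hbc.contrapositive ih

theorem sdset_outSet_iff (ω : Sym2 (Lit n) → Bool) (y : Lit n) :
    SDset (outSet ω y) ↔ ¬ freach ω y (negLit y) := by
  refine ⟨fun h => h y .refl, fun h z hz hzn => h ?_⟩
  have hzy : freach ω z (negLit y) := by simpa using (hzn : freach ω y (negLit z)).contrapositive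
  exact Relation.ReflTransGen.trans hz hzy

theorem ncard_outSet_mem_Icc {ω : Sym2 (Lit n) → Bool} {y : Lit n} (h : SDset (outSet ω y)) :
    (outSet ω y).ncard ∈ Icc 1 n := by
  refine mem_Icc.mpr ⟨Nat.one_le_iff_ne_zero.mpr ?_, ?_⟩
  · exact (Set.ncard_pos (Set.toFinite _)).mpr ⟨y, .refl⟩ |>.ne'
  · rw [← ncard_image_fst_of_sdset h]
    simpa using Set.ncard_le_ncard (Set.subset_univ (Prod.fst '' outSet ω y))

end Literals

section LitMap

variable {m n : ℕ}

def litMap (j : Fin m → Fin n) (b : Bool) (z : Lit m) : Lit n :=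
  (j z.1, b ^^ z.2)

variable {j : Fin m → Fin n} {b : Bool}

theorem litMap_negLit (z : Lit m) : litMap j b (negLit z) = negLit (litMap j b z) := by
  simp [litMap, negLit]

theorem litMap_injective (hj : Injective j) : Injective (litMap j b) := by
  rintro ⟨u, s⟩ ⟨v, t⟩ h
  simp only [litMap, Prod.mk.injEq, Bool.xor_right_inj] at h
  rw [hj h.1, h.2]

theorem litMap_symm_litMap (j : Fin n ≃ Fin n) (z : Lit n) :
    litMap j.symm b (litMap j b z) = z := by
  simp [litMap]

theorem litMap_surjective (j : Fin n ≃ Fin n) (b : Bool) : Surjective (litMap j b) :=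
  fun z => ⟨litMap j.symm b z, by simpa using litMap_symm_litMap (b := b) j.symm z⟩

theorem fEdge_litMap_iff (hj : Injective j) {ω : Sym2 (Lit n) → Bool} {u v : Lit m} :
    fEdge ω (litMap j b u) (litMap j b v) ↔ fEdge (ω ∘ Sym2.map (litMap j b)) u v := by
  simp only [fEdge, Function.comp_apply, Sym2.map_mk, litMap_negLit]
  simp [litMap, hj.ne_iff]

theorem freach_litMap (hj : Injective j) {ω : Sym2 (Lit n) → Bool} {u v : Lit m}
    (h : freach (ω ∘ Sym2.map (litMap j b)) u v) :
    freach ω (litMap j b u) (litMap j b v) :=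
  h.lift _ fun _ _ huv => (fEdge_litMap_iff hj).mpr huv

theorem freach_comp_litMap_iff (j : Fin n ≃ Fin n) {ω : Sym2 (Lit n) → Bool} {u v : Lit n} :
    freach (ω ∘ Sym2.map (litMap j b)) u v ↔ freach ω (litMap j b u) (litMap j b v) := by
  refine ⟨freach_litMap j.injective, fun h => ?_⟩
  have hinv (z : Lit n) : litMap j b (litMap j.symm b z) = z := by
    simpa using litMap_symm_litMap j.symm z
  have hω : (ω ∘ Sym2.map (litMap j b)) ∘ Sym2.map (litMap j.symm b) = ω := by
    ext e
    simp [Sym2.map_map, hinv]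
  rw [← hω] at h
  simpa only [litMap_symm_litMap] using freach_litMap j.symm.injective h

end LitMap

section Symmetry

variable {m n : ℕ}

theorem spineProb_eq (p : ℝ) (z : Lit m) :
    spineProb m p = bernoulliPr p {ω | freach ω z (negLit z)} := by
  rw [spineProb, dif_pos z.1.pos]
  set z₀ : Lit m := (⟨0, z.1.pos⟩, true)
  let j := Equiv.swap z₀.1 z.1
  have hz : litMap j (!z.2) z₀ = z := by simp [j, z₀, litMap]
  rw [← bernoulliPr_preimage_comp p (Sym2.map.injective (litMap_injective j.injective))]
  congr 1
  ext ω
  simp only [Set.mem_preimage, Set.mem_ofPred_eq]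
  rw [freach_comp_litMap_iff, litMap_negLit, hz]

theorem outSet_comp_litMap (j : Fin n ≃ Fin n) (b : Bool) (ω : Sym2 (Lit n) → Bool)
    (y : Lit n) :
    outSet (ω ∘ Sym2.map (litMap j b)) y = litMap j b ⁻¹' outSet ω (litMap j b y) :=
  Set.ext fun _ => freach_comp_litMap_iff j

theorem sdset_preimage_litMap (j : Fin n ≃ Fin n) (b : Bool) {M : Set (Lit n)} :
    SDset (litMap j b ⁻¹' M) ↔ SDset M := by
  refine ⟨fun h z hz hzn => ?_, fun h u hu hun => h _ hu (by rwa [← litMap_negLit])⟩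
  obtain ⟨u, rfl⟩ := litMap_surjective j b z
  exact h u hz (by rwa [Set.mem_preimage, litMap_negLit])

theorem ncard_preimage_litMap (j : Fin n ≃ Fin n) (b : Bool) (M : Set (Lit n)) :
    (litMap j b ⁻¹' M).ncard = M.ncard :=
  Set.ncard_preimage_of_injective_subset_range (litMap_injective j.injective)
    (by rw [(litMap_surjective j b).range_eq]; exact Set.subset_univ M)

theorem image_fst_preimage_litMap (j : Fin n ≃ Fin n) (b : Bool) (M : Set (Lit n)) :
    Prod.fst '' (litMap j b ⁻¹' M) = j ⁻¹' (Prod.fst '' M) := by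
  ext v
  constructor
  · rintro ⟨z, hz, rfl⟩
    exact ⟨_, hz, rfl⟩
  · rintro ⟨z, hz, hzv⟩
    obtain ⟨u, rfl⟩ := litMap_surjective j b z
    exact ⟨u, hz, j.injective hzv⟩

def sdOutSetAvoiding (y : Lit n) (k : ℕ) (w : Fin n) : Set (Sym2 (Lit n) → Bool) :=
  (outSet · y) ⁻¹' {S | SDset S ∧ S.ncard = k ∧ w ∉ Prod.fst '' S}

theorem bernoulliPr_sdOutSetAvoiding_eq (p : ℝ) {y : Lit n} (k : ℕ) {w w' : Fin n}
    (hw : w ≠ y.1) (hw' : w' ≠ y.1) :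
    bernoulliPr p (sdOutSetAvoiding y k w) = bernoulliPr p (sdOutSetAvoiding y k w') := by
  let j := Equiv.swap w w'
  have hy : litMap j false y = y := by
    simp [j, litMap, Equiv.swap_apply_of_ne_of_ne hw.symm hw'.symm]
  rw [← bernoulliPr_preimage_comp p
    (Sym2.map.injective (litMap_injective (b := false) j.injective)) (sdOutSetAvoiding y k w')]
  congr 1
  ext ω
  simp only [sdOutSetAvoiding, Set.mem_preimage, Set.mem_ofPred_eq, outSet_comp_litMap, hy,
    sdset_preimage_litMap, ncard_preimage_litMap, image_fst_preimage_litMap]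
  simp [j]

theorem ncard_compl_fin (V : Set (Fin n)) : Vᶜ.ncard = n - V.ncard := by
  rw [Set.ncard_compl, Nat.card_eq_fintype_card, Fintype.card_fin]

theorem sum_bernoulliPr_sdOutSetAvoiding (p : ℝ) (y : Lit n) (k : ℕ) :
    ∑ w ∈ univ.erase y.1, bernoulliPr p (sdOutSetAvoiding y k w) =
      (n - k : ℕ) * Pnp n p k y := by
  classical
  refine sum_bernoulliPr_eq_mul p (fun w _ ω hω => ⟨hω.1, hω.2.1⟩) fun ω ⟨hsd, hk⟩ => ?_
  set V := Prod.fst '' outSet ω y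
  have hyV : y.1 ∈ V := ⟨y, .refl, rfl⟩
  have hfilter : {w ∈ univ.erase y.1 | ω ∈ sdOutSetAvoiding y k w} = Vᶜ.toFinset := by
    ext w
    simp only [sdOutSetAvoiding, mem_filter, mem_erase, mem_univ, Set.mem_preimage,
      Set.mem_ofPred_eq, Set.mem_toFinset, Set.mem_compl_iff, hsd, hk]
    exact ⟨fun h => h.2.2.2, fun h => ⟨⟨fun hw => h (hw ▸ hyV), trivial⟩, trivial, trivial, h⟩⟩
  rw [hfilter, ← Set.ncard_eq_toFinset_card', ncard_compl_fin, ncard_image_fst_of_sdset hsd,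
    hk]

theorem sub_one_mul_bernoulliPr_sdOutSetAvoiding (p : ℝ) {y : Lit n} {k : ℕ} (hk : k ≤ n)
    {w : Fin n} (hw : w ≠ y.1) :
    ((n : ℝ) - 1) * bernoulliPr p (sdOutSetAvoiding y k w) = ((n : ℝ) - k) * Pnp n p k y := by
  have hsum := sum_bernoulliPr_sdOutSetAvoiding p y k
  rw [sum_congr rfl fun w' hw' => bernoulliPr_sdOutSetAvoiding_eq p k (ne_of_mem_erase hw') hw,
    sum_const, card_erase_of_mem (mem_univ _), card_univ, Fintype.card_fin, nsmul_eq_mul,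
    Nat.cast_sub hk] at hsum
  have hn : 1 ≤ n := Fin.pos w
  rwa [Nat.cast_sub hn, Nat.cast_one] at hsum

end Symmetry

section Restriction

variable {n : ℕ}

theorem outSet_congr {ω ω' : Sym2 (Lit n) → Bool} {y : Lit n}
    (h : ∀ u ∈ outSet ω y, ∀ v, fEdge ω u v ↔ fEdge ω' u v) : outSet ω' y = outSet ω y := by
  ext v
  constructor
  · intro hv
    induction hv with
    | refl => exact .refl
    | tail _ huv ih => exact Relation.ReflTransGen.tail ih ((h _ ih _).mpr huv)
  · intro hv
    induction hv with
    | refl => exact .refl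
    | tail hyu huv ih => exact Relation.ReflTransGen.tail ih ((h _ hyu _).mp huv)

-- Only the out-edges of `S` matter, i.e. the clauses `ū ∨ v` with `u ∈ S`.
theorem dependsOn_outSet_eq (y : Lit n) (S : Set (Lit n)) :
    DependsOn (fun ω => outSet ω y = S) {e | ∃ u ∈ e, u.1 ∈ Prod.fst '' S} := by
  have key (ω ω' : Sym2 (Lit n) → Bool)
      (hag : ∀ e ∈ {e : Sym2 (Lit n) | ∃ u ∈ e, u.1 ∈ Prod.fst '' S}, ω e = ω' e)
      (hS : outSet ω y = S) : outSet ω' y = S := by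
    rw [← hS]
    refine outSet_congr fun u hu v => ?_
    have huv : ω s(negLit u, v) = ω' s(negLit u, v) :=
      hag _ ⟨negLit u, Sym2.mem_mk_left _ _, u, hS ▸ hu, rfl⟩
    simp [fEdge, huv]
  exact fun ω ω' hag => propext ⟨key ω ω' hag, key ω' ω fun e he => (hag e he).symm⟩

theorem spineProb_mul_bernoulliPr_le_of_dependsOn {p : ℝ} (hp0 : 0 ≤ p) (hp1 : p ≤ 1)
    {x : Lit n} {V : Set (Fin n)} (hx : x.1 ∉ V) {D : Set (Sym2 (Lit n) → Bool)}
    (hD : DependsOn (· ∈ D) {e | ∃ u ∈ e, u.1 ∈ V}) :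
    spineProb (n - V.ncard) p * bernoulliPr p D ≤
      bernoulliPr p ({ω | freach ω x (negLit x)} ∩ D) := by
  classical
  let j := Vᶜ.toFinset.orderEmbOfFin (by rw [← Set.ncard_eq_toFinset_card', ncard_compl_fin])
  have hrange : Set.range j = Vᶜ := by rw [range_orderEmbOfFin, Set.coe_toFinset]
  obtain ⟨i, hi⟩ : x.1 ∈ Set.range j := hrange ▸ hx
  have hxi : litMap j false (i, x.2) = x := by simp [litMap, hi]
  have hinj : Injective (Sym2.map (litMap j false)) :=
    Sym2.map.injective (litMap_injective j.injective)
  have hD' : DependsOn (· ∈ D) (Set.range (Sym2.map (litMap j false)))ᶜ := by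
    refine hD.mono ?_
    rintro _ ⟨u, hu, huV⟩ ⟨e, rfl⟩
    obtain ⟨z, -, rfl⟩ := Sym2.mem_map.mp hu
    exact (hrange ▸ Set.mem_range_self z.1 : j z.1 ∈ Vᶜ) huV
  calc spineProb (n - V.ncard) p * bernoulliPr p D
      = bernoulliPr p D * bernoulliPr p {η | freach η (i, x.2) (negLit (i, x.2))} := by
        rw [spineProb_eq p (i, x.2), mul_comm]
    _ = bernoulliPr p
          (D ∩ (· ∘ Sym2.map (litMap j false)) ⁻¹' {η | freach η (i, x.2) (negLit (i, x.2))}) :=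
        (bernoulliPr_inter_preimage_comp p hinj hD' _).symm
    _ ≤ bernoulliPr p ({ω | freach ω x (negLit x)} ∩ D) := by
        refine bernoulliPr_mono hp0 hp1 fun ω ⟨hωD, hω⟩ => ⟨?_, hωD⟩
        have hreach := freach_litMap j.injective hω
        rwa [litMap_negLit, hxi] at hreach

end Restriction

section CovarianceBound

variable {n : ℕ}

theorem bernoulliPr_inter_not_freach (p : ℝ) (A : Set (Sym2 (Lit n) → Bool)) (y : Lit n) :
    bernoulliPr p (A ∩ {ω | freach ω y (negLit y)}ᶜ) =
      ∑ k ∈ Icc 1 n,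
        bernoulliPr p (A ∩ {ω | SDset (outSet ω y) ∧ (outSet ω y).ncard = k}) := by
  have hunion : A ∩ {ω | freach ω y (negLit y)}ᶜ =
      ⋃ k ∈ Icc 1 n, A ∩ {ω | SDset (outSet ω y) ∧ (outSet ω y).ncard = k} := by
    ext ω
    simp only [Set.mem_inter_iff, Set.mem_compl_iff, Set.mem_ofPred_eq, Set.mem_iUnion,
      exists_prop, ← sdset_outSet_iff]
    exact ⟨fun ⟨hA, hsd⟩ => ⟨_, ncard_outSet_mem_Icc hsd, hA, hsd, rfl⟩,
      fun ⟨_, _, hA, hsd, _⟩ => ⟨hA, hsd⟩⟩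
  rw [hunion]
  refine bernoulliPr_biUnion p fun k _ k' _ hkk' => ?_
  exact Set.disjoint_left.mpr fun ω hk hk' => hkk' (hk.2.2.symm.trans hk'.2.2)

theorem sum_Pnp (p : ℝ) (y : Lit n) :
    ∑ k ∈ Icc 1 n, Pnp n p k y = 1 - bernoulliPr p {ω | freach ω y (negLit y)} := by
  simpa [Pnp, bernoulliPr_compl] using (bernoulliPr_inter_not_freach p Set.univ y).symm

theorem spineProb_mul_bernoulliPr_sdOutSetAvoiding_le {p : ℝ} (hp0 : 0 ≤ p) (hp1 : p ≤ 1)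
    (x y : Lit n) (k : ℕ) :
    spineProb (n - k) p * bernoulliPr p (sdOutSetAvoiding y k x.1) ≤
      bernoulliPr p ({ω | freach ω x (negLit x)} ∩ sdOutSetAvoiding y k x.1) := by
  refine mul_bernoulliPr_le_of_forall_fiber (outSet · y)
    {S | SDset S ∧ S.ncard = k ∧ x.1 ∉ Prod.fst '' S} fun S hS => ?_
  obtain ⟨hsd, hk, hxS⟩ := hS
  have h := spineProb_mul_bernoulliPr_le_of_dependsOn hp0 hp1 hxS (dependsOn_outSet_eq y S)
  rwa [ncard_image_fst_of_sdset hsd, hk] at h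

theorem Pnp_mul_le {p : ℝ} (hp0 : 0 ≤ p) (hp1 : p ≤ 1) {x y : Lit n} (hxy : x.1 ≠ y.1)
    {k : ℕ} (hk : k ≤ n) :
    Pnp n p k y * (((n : ℝ) - k) / ((n : ℝ) - 1) * spineProb (n - k) p) ≤
      bernoulliPr p
        ({ω | freach ω x (negLit x)} ∩ {ω | SDset (outSet ω y) ∧ (outSet ω y).ncard = k}) := by
  have hn : (1 : ℝ) < n := by
    exact_mod_cast (Fintype.one_lt_card_iff.mpr ⟨x.1, y.1, hxy⟩).trans_eq (Fintype.card_fin n)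
  have havg := sub_one_mul_bernoulliPr_sdOutSetAvoiding p hk hxy
  calc Pnp n p k y * (((n : ℝ) - k) / ((n : ℝ) - 1) * spineProb (n - k) p)
      = spineProb (n - k) p * bernoulliPr p (sdOutSetAvoiding y k x.1) := by
        field_simp [(sub_pos.mpr hn).ne']
        linear_combination spineProb (n - k) p * havg.symm
    _ ≤ bernoulliPr p ({ω | freach ω x (negLit x)} ∩ sdOutSetAvoiding y k x.1) :=
        spineProb_mul_bernoulliPr_sdOutSetAvoiding_le hp0 hp1 x y k
    _ ≤ _ := by
        refine bernoulliPr_mono hp0 hp1 (Set.inter_subset_inter_right _ fun ω hω => ?_)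
        exact ⟨hω.1, hω.2.1⟩

end CovarianceBound

/-- Covariance bound for the events `x ⇝ x̄` and `y ⇝ ȳ`:
`Pr(x⇝x̄ ∧ y⇝ȳ) − Pr(x⇝x̄)·Pr(y⇝ȳ)
  ≤ Σ_{k≥1} P_{n,p}(k)·[Pr(x⇝x̄ in F_{n,p}) − ((n−k)/(n−1))·Pr(x⇝x̄ in F_{n−k,p})]`. -/
theorem covariance_bound (n : ℕ) (p : ℝ) (hp0 : 0 ≤ p) (hp1 : p ≤ 1)
    (x y : Lit n) (hxy : x.1 ≠ y.1) :
    bernoulliPr p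
        {ω : Sym2 (Lit n) → Bool |
          freach ω x (negLit x) ∧ freach ω y (negLit y)} -
      bernoulliPr p {ω : Sym2 (Lit n) → Bool | freach ω x (negLit x)} *
        bernoulliPr p {ω : Sym2 (Lit n) → Bool | freach ω y (negLit y)} ≤
    ∑ k ∈ Finset.Icc 1 n,
      Pnp n p k y *
        (bernoulliPr p {ω : Sym2 (Lit n) → Bool | freach ω x (negLit x)} -
          (((n : ℝ) - (k : ℝ)) / ((n : ℝ) - 1)) * spineProb (n - k) p) := by
  have hle := sum_le_sum (s := Icc 1 n) fun k hk =>
    Pnp_mul_le (p := p) hp0 hp1 hxy (mem_Icc.mp hk).2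
  rw [← bernoulliPr_inter_not_freach] at hle
  simp only [mul_sub, sum_sub_distrib, ← sum_mul, sum_Pnp]
  set A := {ω : Sym2 (Lit n) → Bool | freach ω x (negLit x)}
  set B := {ω : Sym2 (Lit n) → Bool | freach ω y (negLit y)}
  have hsplit : bernoulliPr p {ω | freach ω x (negLit x) ∧ freach ω y (negLit y)} +
      bernoulliPr p (A ∩ Bᶜ) = bernoulliPr p A :=
    bernoulliPr_inter_add_inter_compl p A B
  linarith
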